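/- Define H₁, H₂ : ℝ⁴ → ℝ on coordinates (q₁, q₂, p₁, p₂) by H₁ = 2p₁p₂ + q₁p₂² + q₁³ - 2q₁q₂ and H₂ = p₁² + 2q₁p₁p₂ + (q₁² - q₂)p₂² + q₁²q₂ - q₂². Then their canonical Poisson bracket vanishes identically: for all points of ℝ⁴, ∑_{i=1}^{2} (∂H₁/∂q_i · ∂H₂/∂p_i - ∂H₁/∂p_i · ∂H₂/∂q_i) = 0. -/

import Mathlib

/-- The Stäckel Hamiltonian `H₁ = 2p₁p₂ + q₁p₂² + q₁³ - 2q₁q₂` (n = 2),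
as a function of the canonical coordinates `(q₁, q₂, p₁, p₂)`. -/
def H₁n2 (q₁ q₂ p₁ p₂ : ℝ) : ℝ := 2 * p₁ * p₂ + q₁ * p₂ ^ 2 + q₁ ^ 3 - 2 * q₁ * q₂

/-- The Stäckel Hamiltonian `H₂ = p₁² + 2q₁p₁p₂ + (q₁² - q₂)p₂² + q₁²q₂ - q₂²` (n = 2). -/
def H₂n2 (q₁ q₂ p₁ p₂ : ℝ) : ℝ :=
  p₁ ^ 2 + 2 * q₁ * p₁ * p₂ + (q₁ ^ 2 - q₂) * p₂ ^ 2 + q₁ ^ 2 * q₂ - q₂ ^ 2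

/-! Each Hamiltonian is a polynomial of degree at most three in every coordinate separately, so
each partial derivative is that of a one-variable cubic, and the bracket reduces to a polynomial
identity in `(q₁, q₂, p₁, p₂)`. -/

theorem hasDerivAt_cubic (a b c d x : ℝ) :
    HasDerivAt (fun x => a + b * x + c * x ^ 2 + d * x ^ 3) (b + 2 * c * x + 3 * d * x ^ 2) x := by
  have hb := (hasDerivAt_id' x).const_mul b
  have hc := (hasDerivAt_pow 2 x).const_mul c
  have hd := (hasDerivAt_pow 3 x).const_mul d
  refine ((((hasDerivAt_const x a).fun_add hb).fun_add hc).fun_add hd).congr_deriv ?_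
  norm_num
  ring

theorem deriv_cubic (a b c d x : ℝ) :
    deriv (fun x => a + b * x + c * x ^ 2 + d * x ^ 3) x = b + 2 * c * x + 3 * d * x ^ 2 :=
  (hasDerivAt_cubic a b c d x).deriv

section PartialDerivatives

variable (q₁ q₂ p₁ p₂ : ℝ)

theorem deriv_H₁n2_q₁ : deriv (fun x => H₁n2 x q₂ p₁ p₂) q₁ = p₂ ^ 2 - 2 * q₂ + 3 * q₁ ^ 2 := by
  rw [show (fun x => H₁n2 x q₂ p₁ p₂) = fun x => 2 * p₁ * p₂ + (p₂ ^ 2 - 2 * q₂) * x + 0 * x ^ 2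
    + 1 * x ^ 3 from funext fun x => by unfold H₁n2; ring, deriv_cubic]
  ring

theorem deriv_H₁n2_q₂ : deriv (fun x => H₁n2 q₁ x p₁ p₂) q₂ = -2 * q₁ := by
  rw [show (fun x => H₁n2 q₁ x p₁ p₂) = fun x => (2 * p₁ * p₂ + q₁ * p₂ ^ 2 + q₁ ^ 3)
    + (-2 * q₁) * x + 0 * x ^ 2 + 0 * x ^ 3 from funext fun x => by unfold H₁n2; ring, deriv_cubic]
  ring

theorem deriv_H₁n2_p₁ : deriv (fun x => H₁n2 q₁ q₂ x p₂) p₁ = 2 * p₂ := by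
  rw [show (fun x => H₁n2 q₁ q₂ x p₂) = fun x => (q₁ * p₂ ^ 2 + q₁ ^ 3 - 2 * q₁ * q₂)
    + 2 * p₂ * x + 0 * x ^ 2 + 0 * x ^ 3 from funext fun x => by unfold H₁n2; ring, deriv_cubic]
  ring

theorem deriv_H₁n2_p₂ : deriv (fun x => H₁n2 q₁ q₂ p₁ x) p₂ = 2 * p₁ + 2 * q₁ * p₂ := by
  rw [show (fun x => H₁n2 q₁ q₂ p₁ x) = fun x => (q₁ ^ 3 - 2 * q₁ * q₂)
    + 2 * p₁ * x + q₁ * x ^ 2 + 0 * x ^ 3 from funext fun x => by unfold H₁n2; ring, deriv_cubic]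
  ring

theorem deriv_H₂n2_q₁ :
    deriv (fun x => H₂n2 x q₂ p₁ p₂) q₁ = 2 * p₁ * p₂ + 2 * (p₂ ^ 2 + q₂) * q₁ := by
  rw [show (fun x => H₂n2 x q₂ p₁ p₂) = fun x => (p₁ ^ 2 - q₂ * p₂ ^ 2 - q₂ ^ 2)
    + 2 * p₁ * p₂ * x + (p₂ ^ 2 + q₂) * x ^ 2 + 0 * x ^ 3
    from funext fun x => by unfold H₂n2; ring, deriv_cubic]
  ring

theorem deriv_H₂n2_q₂ : deriv (fun x => H₂n2 q₁ x p₁ p₂) q₂ = q₁ ^ 2 - p₂ ^ 2 - 2 * q₂ := by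
  rw [show (fun x => H₂n2 q₁ x p₁ p₂) = fun x => (p₁ ^ 2 + 2 * q₁ * p₁ * p₂ + q₁ ^ 2 * p₂ ^ 2)
    + (q₁ ^ 2 - p₂ ^ 2) * x + (-1) * x ^ 2 + 0 * x ^ 3
    from funext fun x => by unfold H₂n2; ring, deriv_cubic]
  ring

theorem deriv_H₂n2_p₁ : deriv (fun x => H₂n2 q₁ q₂ x p₂) p₁ = 2 * q₁ * p₂ + 2 * p₁ := by
  rw [show (fun x => H₂n2 q₁ q₂ x p₂) = fun x => ((q₁ ^ 2 - q₂) * p₂ ^ 2 + q₁ ^ 2 * q₂ - q₂ ^ 2)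
    + 2 * q₁ * p₂ * x + 1 * x ^ 2 + 0 * x ^ 3
    from funext fun x => by unfold H₂n2; ring, deriv_cubic]
  ring

theorem deriv_H₂n2_p₂ :
    deriv (fun x => H₂n2 q₁ q₂ p₁ x) p₂ = 2 * q₁ * p₁ + 2 * (q₁ ^ 2 - q₂) * p₂ := by
  rw [show (fun x => H₂n2 q₁ q₂ p₁ x) = fun x => (p₁ ^ 2 + q₁ ^ 2 * q₂ - q₂ ^ 2)
    + 2 * q₁ * p₁ * x + (q₁ ^ 2 - q₂) * x ^ 2 + 0 * x ^ 3
    from funext fun x => by unfold H₂n2; ring, deriv_cubic]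
  ring

end PartialDerivatives

theorem poisson_bracket_n2 (q₁ q₂ p₁ p₂ : ℝ) :
    deriv (fun x => H₁n2 x q₂ p₁ p₂) q₁ * deriv (fun x => H₂n2 q₁ q₂ x p₂) p₁
      - deriv (fun x => H₁n2 q₁ q₂ x p₂) p₁ * deriv (fun x => H₂n2 x q₂ p₁ p₂) q₁
      + deriv (fun x => H₁n2 q₁ x p₁ p₂) q₂ * deriv (fun x => H₂n2 q₁ q₂ p₁ x) p₂
      - deriv (fun x => H₁n2 q₁ q₂ p₁ x) p₂ * deriv (fun x => H₂n2 q₁ x p₁ p₂) q₂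
      = 0 := by
  rw [deriv_H₁n2_q₁, deriv_H₁n2_q₂, deriv_H₁n2_p₁, deriv_H₁n2_p₂,
    deriv_H₂n2_q₁, deriv_H₂n2_q₂, deriv_H₂n2_p₁, deriv_H₂n2_p₂]
  ring
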